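/- Let Φ be the root system of type E₇ with Weyl group W, highest root φ, and let y = w₀ w_{E₆}, where w₀ is the longest element of W and w_{E₆} is the longest element of the parabolic subgroup ⟨s₁,…,s₆⟩. Then every reduced expression of y contains at least 3 occurrences of the generator s₇; in particular s₇ y s₇ does not lie in the parabolic subgroup W₇ = ⟨s₁,…,s₆⟩. -/

import Mathlib

open scoped RealInnerProductSpace Pointwise

namespace Paper

variable {V : Type*} [NormedAddCommGroup V] [InnerProductSpace ℝ V]

/-- The orthogonal reflection in the hyperplane perpendicular to `α`
(by convention the identity if `α = 0`). -/
noncomputable def sref (α : V) : V ≃ₗ[ℝ] V :=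
  letI := Classical.propDecidable (α = 0)
  if h : α = 0 then LinearEquiv.refl ℝ V
  else
    Module.reflection (x := α) (f := (2 / ⟪α, α⟫) • (innerₛₗ ℝ α)) <| by
      have h' : ⟪α, α⟫ ≠ 0 := inner_self_ne_zero.mpr h
      have h2 : ((2 / ⟪α, α⟫) • (innerₛₗ ℝ α)) α = (2 / ⟪α, α⟫) * ⟪α, α⟫ := by
        simp
      rw [h2, div_mul_cancel₀ _ h']

/-- `Φ` is a (finite, reduced, crystallographic) root system in the real inner
product space `V`. -/
structure IsRootSystem (Φ : Set V) : Prop where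
  finite : Φ.Finite
  nonzero : (0 : V) ∉ Φ
  span_top : Submodule.span ℝ Φ = ⊤
  neg_mem : ∀ α ∈ Φ, -α ∈ Φ
  refl_mem : ∀ α ∈ Φ, ∀ β ∈ Φ, sref α β ∈ Φ
  crystallographic : ∀ α ∈ Φ, ∀ β ∈ Φ, ∃ m : ℤ, 2 * ⟪α, β⟫ / ⟪β, β⟫ = (m : ℝ)
  reduced : ∀ α ∈ Φ, ∀ t : ℝ, t • α ∈ Φ → t = 1 ∨ t = -1

/-- Irreducibility of a root system. -/
def IsIrreducible (Φ : Set V) : Prop :=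
  ∀ Φ₁ Φ₂ : Set V, Φ = Φ₁ ∪ Φ₂ → (∀ α ∈ Φ₁, ∀ β ∈ Φ₂, ⟪α, β⟫ = 0) →
    Φ₁ = ∅ ∨ Φ₂ = ∅

/-- `αs` is a system of simple roots for `Φ`, with corresponding set `Pos` of
positive roots. -/
structure IsBase {n : ℕ} (Φ : Set V) (αs : Fin n → V) (Pos : Set V) : Prop where
  mem : ∀ i, αs i ∈ Φ
  indep : LinearIndependent ℝ αs
  span_eq : Submodule.span ℝ (Set.range αs) = ⊤
  pos_subset : Pos ⊆ Φ
  mem_pos_iff : ∀ β ∈ Φ, (β ∈ Pos ↔ ∃ c : Fin n → ℕ, β = ∑ i, (c i : ℝ) • αs i)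
  pos_or_neg : ∀ β ∈ Φ, β ∈ Pos ∨ -β ∈ Pos

/-- The Weyl group of `Φ`: the subgroup of `GL(V)` generated by the reflections
in the roots. -/
noncomputable def weylGroup (Φ : Set V) : Subgroup (V ≃ₗ[ℝ] V) :=
  Subgroup.closure (sref '' Φ)

/-- The standard parabolic subgroup generated by the simple reflections `sref (αs i)`
for `i ∈ J`. -/
noncomputable def parab {n : ℕ} (αs : Fin n → V) (J : Set (Fin n)) :
    Subgroup (V ≃ₗ[ℝ] V) :=
  Subgroup.closure ((fun i => sref (αs i)) '' J)

/-- The inversion set `Φ(w) = {β ∈ Φ⁺ : w⁻¹ β ∈ −Φ⁺}`. -/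
def invSet (Pos : Set V) (w : V ≃ₗ[ℝ] V) : Set V :=
  {β ∈ Pos | -(w⁻¹ β) ∈ Pos}

/-- The length of a Weyl group element, as the number of inversions. -/
noncomputable def len (Pos : Set V) (w : V ≃ₗ[ℝ] V) : ℕ :=
  (invSet Pos w).ncard

/-- `φ` is the highest root of the positive system `Pos` with simple roots `αs`. -/
def IsHighestRoot {n : ℕ} (αs : Fin n → V) (Pos : Set V) (φ : V) : Prop :=
  φ ∈ Pos ∧ ∀ β ∈ Pos, ∃ c : Fin n → ℕ, φ - β = ∑ i, (c i : ℝ) • αs i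

/-- Adjacency in the Bourbaki-labelled Dynkin diagram of the `E`-series (nodes `1,…,8`). -/
def eAdj (i j : ℕ) : Prop :=
  (i, j) ∈ ([(1,3),(3,1),(3,4),(4,3),(4,5),(5,4),(5,6),(6,5),(6,7),(7,6),(7,8),(8,7),(2,4),(4,2)] :
    List (ℕ × ℕ))

instance (i j : ℕ) : Decidable (eAdj i j) := by unfold eAdj; infer_instance

/-- Cartan integers of the `E`-series (Bourbaki labelling, nodes `1,…,8`):
`E₆`, `E₇` and `E₈` are obtained by restricting to nodes `1,…,n`. -/
def cartanE (i j : ℕ) : ℝ :=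
  if i = j then 2 else if eAdj i j then -1 else 0

/-- Cartan integers of `F₄` (Bourbaki labelling, nodes `1,…,4`; `α₁, α₂` long,
`α₃, α₄` short), with the convention `C i j = 2(αᵢ,αⱼ)/(αⱼ,αⱼ)`. -/
def cartanF (i j : ℕ) : ℝ :=
  if i = j then 2 else
  if (i, j) ∈ ([(1,2),(2,1),(3,2),(3,4),(4,3)] : List (ℕ × ℕ)) then -1 else
  if (i, j) = (2,3) then -2 else 0

/-- Cartan integers of `Aₙ` (nodes `1,…,n`). -/
def cartanA (i j : ℕ) : ℝ :=
  if i = j then 2 else if i + 1 = j ∨ j + 1 = i then -1 else 0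

/-- The simple roots `αs` realise the Cartan matrix `C` (indexed by nodes `1,…,n`). -/
def CartanIs {n : ℕ} (αs : Fin n → V) (C : ℕ → ℕ → ℝ) : Prop :=
  ∀ i j : Fin n, 2 * ⟪αs i, αs j⟫ / ⟪αs j, αs j⟫ = C ((i : ℕ) + 1) ((j : ℕ) + 1)


/-! ### Auxiliary lemmas -/

lemma sref_apply (α v : V) (h : α ≠ 0) :
    sref α v = v - (2 / ⟪α, α⟫ * ⟪α, v⟫) • α := by
  rw [sref, dif_neg h, Module.reflection_apply]
  simp

lemma sref_apply' (α v : V) : sref α v = v - (2 / ⟪α, α⟫ * ⟪α, v⟫) • α := by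
  by_cases h : α = 0
  · subst h; simp [sref]
  · exact sref_apply α v h

lemma sref_inner (α u v : V) : ⟪sref α u, sref α v⟫ = ⟪u, v⟫ := by
  by_cases h : α = 0
  · simp [sref, h]
  have h' : ⟪α, α⟫ ≠ 0 := inner_self_ne_zero.mpr h
  rw [sref_apply α u h, sref_apply α v h]
  simp only [inner_sub_left, inner_sub_right, real_inner_smul_left, real_inner_smul_right]
  rw [real_inner_comm u α]
  field_simp
  ring

lemma sref_sref (α v : V) : sref α (sref α v) = v := by
  by_cases h : α = 0
  · simp [sref, h]
  · rw [sref, dif_neg h]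
    exact Module.involutive_reflection _ v

/-- `g` is orthogonal and stabilises `Φ`. -/
def Good (Φ : Set V) (g : V ≃ₗ[ℝ] V) : Prop :=
  (∀ u v : V, ⟪g u, g v⟫ = ⟪u, v⟫) ∧ (∀ β : V, β ∈ Φ ↔ g β ∈ Φ)

lemma good_one (Φ : Set V) : Good Φ 1 := ⟨fun _ _ => rfl, fun _ => Iff.rfl⟩

lemma lmul_apply (g h : V ≃ₗ[ℝ] V) (v : V) : (g * h) v = g (h v) := rfl

lemma linv_apply_apply (g : V ≃ₗ[ℝ] V) (v : V) : g (g⁻¹ v) = v :=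
  g.apply_symm_apply v

lemma good_mul {Φ : Set V} {g h : V ≃ₗ[ℝ] V} (hg : Good Φ g) (hh : Good Φ h) :
    Good Φ (g * h) := by
  refine ⟨fun u v => ?_, fun β => ?_⟩
  · show ⟪g (h u), g (h v)⟫ = _
    rw [hg.1, hh.1]
  · rw [hh.2, hg.2]; rfl

lemma good_inv {Φ : Set V} {g : V ≃ₗ[ℝ] V} (hg : Good Φ g) : Good Φ g⁻¹ := by
  refine ⟨fun u v => ?_, fun β => ?_⟩
  · rw [← hg.1 (g⁻¹ u) (g⁻¹ v), linv_apply_apply, linv_apply_apply]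
  · rw [hg.2 (g⁻¹ β), linv_apply_apply]

lemma good_inner_right {Φ : Set V} {g : V ≃ₗ[ℝ] V} (hg : Good Φ g) (u v : V) :
    ⟪u, g v⟫ = ⟪g⁻¹ u, v⟫ := by
  rw [← hg.1 (g⁻¹ u) v, linv_apply_apply]

lemma good_sref {Φ : Set V} (hΦ : IsRootSystem Φ) {α : V} (hα : α ∈ Φ) : Good Φ (sref α) := by
  refine ⟨sref_inner α, fun β => ⟨fun hβ => hΦ.refl_mem α hα β hβ, fun hβ => ?_⟩⟩
  have := hΦ.refl_mem α hα _ hβ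
  rwa [sref_sref] at this

lemma good_weyl {Φ : Set V} (hΦ : IsRootSystem Φ) {g : V ≃ₗ[ℝ] V} (hg : g ∈ weylGroup Φ) :
    Good Φ g := by
  refine Subgroup.closure_induction (fun x hx => ?_) (good_one Φ)
    (fun x y _ _ hx hy => good_mul hx hy) (fun x _ hx => good_inv hx) hg
  obtain ⟨α, hα, rfl⟩ := hx
  exact good_sref hΦ hα

lemma ext_inner {n : ℕ} {αs : Fin n → V} (hspan : Submodule.span ℝ (Set.range αs) = ⊤)
    {v w : V} (h : ∀ j, ⟪v - w, αs j⟫ = 0) : v = w := by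
  have key : ∀ y : V, ⟪v - w, y⟫ = 0 := by
    intro y
    have hy : y ∈ Submodule.span ℝ (Set.range αs) := by rw [hspan]; trivial
    induction hy using Submodule.span_induction with
    | mem x hx => obtain ⟨j, rfl⟩ := hx; exact h j
    | zero => exact inner_zero_right _
    | add x y _ _ hx hy => rw [inner_add_right, hx, hy, add_zero]
    | smul c x _ hx => rw [real_inner_smul_right, hx, mul_zero]
  have := key (v - w)
  rw [inner_self_eq_zero, sub_eq_zero] at this
  exact this

/-- The `E₇` Cartan matrix, reindexed by `Fin 7`. -/
def CEZ : Fin 7 → Fin 7 → ℤ :=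
  ![![2,0,-1,0,0,0,0],![0,2,0,-1,0,0,0],![-1,0,2,-1,0,0,0],![0,-1,-1,2,-1,0,0],
    ![0,0,0,-1,2,-1,0],![0,0,0,0,-1,2,-1],![0,0,0,0,0,-1,2]]

/-- Twice the inverse of the `E₇` Cartan matrix. -/
def ANZ : Fin 7 → Fin 7 → ℤ :=
  ![![4,4,6,8,6,4,2], ![4,7,8,12,9,6,3], ![6,8,12,16,12,8,4], ![8,12,16,24,18,12,6],
    ![6,9,12,18,15,10,5], ![4,6,8,12,10,8,4], ![2,3,4,6,5,4,3]]

lemma ACZ : ∀ k j : Fin 7, (∑ i, ANZ i k * CEZ i j) = if k = j then 2 else 0 := by decide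

lemma ANZ_ge_two : ∀ i k : Fin 7, 2 ≤ ANZ i k := by decide

lemma ANZ_diag : ∀ j : Fin 7, ANZ j j = 3 → j = 6 := by decide

lemma ANZ_66 : ANZ 6 6 = 3 := by decide

lemma cartanE_eval (i j : Fin 7) : cartanE ((i : ℕ) + 1) ((j : ℕ) + 1) = ((CEZ i j : ℤ) : ℝ) := by
  fin_cases i <;> fin_cases j <;>
    simp only [cartanE, CEZ] <;> norm_num <;> decide

set_option maxHeartbeats 1000000 in
theorem statement11 (Φ : Set V) (hΦ : IsRootSystem Φ)
    (αs : Fin 7 → V) (Pos : Set V) (hbase : IsBase Φ αs Pos)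
    (hE : CartanIs αs cartanE)
    (ω : Fin 7 → V) (hω : ∀ i j, ⟪ω i, αs j⟫ = if i = j then 1 else 0)
    (w₀ : V ≃ₗ[ℝ] V) (hw₀mem : w₀ ∈ weylGroup Φ) (hw₀ : ∀ β ∈ Pos, -(w₀ β) ∈ Pos)
    (wE6 : V ≃ₗ[ℝ] V) (hwE6mem : wE6 ∈ parab αs {j | j ≠ 6})
    (hwE6 : ∀ β ∈ Pos, ⟪β, ω 6⟫ = 0 → -(wE6 β) ∈ Pos) :
    (∀ l : List (Fin 7), (l.map fun i => sref (αs i)).prod = w₀ * wE6 →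
        (∀ l' : List (Fin 7), (l'.map fun i => sref (αs i)).prod = w₀ * wE6 →
          l.length ≤ l'.length) →
        3 ≤ l.count 6) ∧
      sref (αs 6) * (w₀ * wE6) * sref (αs 6) ∉ parab αs {j | j ≠ 6} := by
  classical
  have hαΦ : ∀ j, αs j ∈ Φ := hbase.mem
  have hαne : ∀ j : Fin 7, αs j ≠ 0 := fun j h => hΦ.nonzero (h ▸ hαΦ j)
  have hip : ∀ j : Fin 7, ⟪αs j, αs j⟫ ≠ 0 := fun j => inner_self_ne_zero.mpr (hαne j)
  set L2 : ℝ := ⟪αs 6, αs 6⟫ with hL2def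
  have hL2pos : (0:ℝ) < L2 :=
    lt_of_le_of_ne real_inner_self_nonneg (Ne.symm (inner_self_ne_zero.mpr (hαne 6)))
  have hL2ne : L2 ≠ 0 := ne_of_gt hL2pos
  have hE' : ∀ i j : Fin 7, 2 * ⟪αs i, αs j⟫ / ⟪αs j, αs j⟫ = ((CEZ i j : ℤ) : ℝ) :=
    fun i j => (hE i j).trans (cartanE_eval i j)
  have pairlen : ∀ i j : Fin 7, CEZ i j = -1 → CEZ j i = -1 →
      ⟪αs i, αs i⟫ = ⟪αs j, αs j⟫ := by
    intro i j hij hji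
    have h1 := hE' i j
    have h2 := hE' j i
    rw [hij] at h1
    rw [hji] at h2
    rw [div_eq_iff (hip j)] at h1
    rw [div_eq_iff (hip i)] at h2
    rw [real_inner_comm] at h2
    push_cast at h1 h2
    linarith
  have len : ∀ j : Fin 7, ⟪αs j, αs j⟫ = L2 := by
    have e56 : ⟪αs 5, αs 5⟫ = ⟪αs 6, αs 6⟫ := pairlen 5 6 (by decide) (by decide)
    have e45 : ⟪αs 4, αs 4⟫ = ⟪αs 5, αs 5⟫ := pairlen 4 5 (by decide) (by decide)
    have e34 : ⟪αs 3, αs 3⟫ = ⟪αs 4, αs 4⟫ := pairlen 3 4 (by decide) (by decide)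
    have e23 : ⟪αs 2, αs 2⟫ = ⟪αs 3, αs 3⟫ := pairlen 2 3 (by decide) (by decide)
    have e02 : ⟪αs 0, αs 0⟫ = ⟪αs 2, αs 2⟫ := pairlen 0 2 (by decide) (by decide)
    have e13 : ⟪αs 1, αs 1⟫ = ⟪αs 3, αs 3⟫ := pairlen 1 3 (by decide) (by decide)
    intro j
    fin_cases j
    · exact e02.trans (e23.trans (e34.trans (e45.trans e56)))
    · exact e13.trans (e34.trans (e45.trans e56))
    · exact e23.trans (e34.trans (e45.trans e56))
    · exact e34.trans (e45.trans e56)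
    · exact e45.trans e56
    · exact e56
    · exact hL2def.symm
  have gram : ∀ i j : Fin 7, ⟪αs i, αs j⟫ = ((CEZ i j : ℤ) : ℝ) * L2 / 2 := by
    intro i j
    have h := hE' i j
    rw [div_eq_iff (hip j), len j] at h
    linarith
  -- the fundamental coweights expressed in the basis of simple roots
  set wv : Fin 7 → V := fun k => L2⁻¹ • ∑ i, ((ANZ i k : ℤ) : ℝ) • αs i with hwv
  have Wdual : ∀ k j : Fin 7, ⟪wv k, αs j⟫ = if k = j then 1 else 0 := by
    intro k j
    rw [hwv]
    simp only [sum_inner, real_inner_smul_left]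
    have hterm : (∑ i, ((ANZ i k : ℤ) : ℝ) * ⟪αs i, αs j⟫) =
        ((∑ i, ANZ i k * CEZ i j : ℤ) : ℝ) * L2 / 2 := by
      push_cast
      rw [Finset.sum_mul, Finset.sum_div]
      refine Finset.sum_congr rfl fun i _ => ?_
      rw [gram i j]
      ring
    rw [hterm, ACZ k j]
    split_ifs with h
    · push_cast
      field_simp
    · push_cast
      simp
  have ωip : ∀ i : Fin 7, ⟪αs i, ω 6⟫ = if (6 : Fin 7) = i then 1 else 0 := by
    intro i
    rw [real_inner_comm]
    exact hω 6 i
  have ωeq : ω 6 = wv 6 := by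
    apply ext_inner hbase.span_eq
    intro j
    rw [inner_sub_left, hω 6 j, Wdual 6 j, sub_self]
  have ωsum : ∀ v : V, (∀ j, ⟪v, αs j⟫ = 0) → v = 0 := by
    intro v hv
    have := ext_inner (αs := αs) hbase.span_eq (v := v) (w := 0) (fun j => by
      rw [sub_zero]; exact hv j)
    exact this
  have ωω : ⟪ω 6, ω 6⟫ = 3 / L2 := by
    nth_rewrite 2 [ωeq]
    rw [hwv]
    simp only [real_inner_smul_right, inner_sum]
    have : (∑ i, ((ANZ i 6 : ℤ) : ℝ) * ⟪ω 6, αs i⟫) = 3 := by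
      have h1 : ∀ i : Fin 7, ((ANZ i 6 : ℤ) : ℝ) * ⟪ω 6, αs i⟫ =
          ((ANZ i 6 : ℤ) : ℝ) * (if (6:Fin 7) = i then 1 else 0) := by
        intro i
        rw [hω 6 i]
      rw [Finset.sum_congr rfl fun i _ => h1 i]
      simp only [mul_ite, mul_one, mul_zero]
      rw [Finset.sum_ite_eq]
      simp [ANZ_66]
    rw [this]
    field_simp
  -- positivity and integrality of the ω-coefficients of roots
  have posNat : ∀ β ∈ Pos, ∃ n : ℕ, ⟪β, ω 6⟫ = (n : ℝ) := by
    intro β hβ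
    obtain ⟨c, hc⟩ := (hbase.mem_pos_iff β (hbase.pos_subset hβ)).mp hβ
    refine ⟨c 6, ?_⟩
    rw [hc, sum_inner]
    have h1 : ∀ i : Fin 7, ⟪((c i : ℕ) : ℝ) • αs i, ω 6⟫ =
        ((c i : ℕ) : ℝ) * (if (6:Fin 7) = i then 1 else 0) := by
      intro i
      rw [real_inner_smul_left, ωip i]
    rw [Finset.sum_congr rfl fun i _ => h1 i]
    simp only [mul_ite, mul_one, mul_zero]
    rw [Finset.sum_ite_eq]
    simp
  have rootInt : ∀ β ∈ Φ, ∃ n : ℤ, ⟪β, ω 6⟫ = (n : ℝ) := by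
    intro β hβ
    rcases hbase.pos_or_neg β hβ with h | h
    · obtain ⟨n, hn⟩ := posNat β h
      exact ⟨n, by exact_mod_cast hn⟩
    · obtain ⟨n, hn⟩ := posNat (-β) h
      rw [inner_neg_left] at hn
      exact ⟨-n, by push_cast; linarith⟩
  have rootBound : ∀ β ∈ Φ, ⟪β, β⟫ = L2 → |⟪β, ω 6⟫| ≤ 1 := by
    intro β hβ hlen
    obtain ⟨n, hn⟩ := rootInt β hβ
    have hcs := real_inner_mul_inner_self_le β (ω 6)
    rw [hn, hlen, ωω] at hcs
    have h3 : L2 * (3 / L2) = 3 := by field_simp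
    rw [h3] at hcs
    have hz : n * n ≤ 3 := by exact_mod_cast hcs
    have habs : |n| ≤ 1 := by
      rcases le_or_gt |n| 1 with h | h
      · exact h
      · exfalso; nlinarith [abs_mul_abs_self n]
    rw [hn]
    calc |(n:ℝ)| = ((|n| : ℤ) : ℝ) := by push_cast; rfl
    _ ≤ 1 := by exact_mod_cast habs
  -- the parabolic subgroup
  have hPle : parab αs {j | j ≠ 6} ≤ weylGroup Φ := by
    apply (Subgroup.closure_le _).mpr
    rintro x ⟨i, _, rfl⟩
    exact Subgroup.subset_closure ⟨αs i, hαΦ i, rfl⟩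
  have pfix : ∀ p ∈ parab αs {j | j ≠ 6}, ∀ v : V, ⟪p v, ω 6⟫ = ⟪v, ω 6⟫ := by
    intro p hp
    refine Subgroup.closure_induction ?_ (fun v => rfl)
      (fun x y _ _ hx hy v => ?_) (fun x _ hx v => ?_) hp
    · rintro x ⟨i, hi, rfl⟩ v
      rw [sref_apply' (αs i) v, inner_sub_left, real_inner_smul_left]
      have hzero : ⟪αs i, ω 6⟫ = 0 := by
        rw [ωip i, if_neg]
        exact fun h => hi h.symm
      rw [hzero, mul_zero, sub_zero]
    · rw [lmul_apply, hx, hy]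
    · have := hx (x⁻¹ v)
      rw [linv_apply_apply] at this
      exact this.symm
  have αpos : ∀ j : Fin 7, αs j ∈ Pos := by
    intro j
    refine (hbase.mem_pos_iff _ (hαΦ j)).mpr ⟨fun i => if i = j then 1 else 0, ?_⟩
    have h1 : ∀ i : Fin 7, (((if i = j then 1 else 0 : ℕ)) : ℝ) • αs i =
        if i = j then αs i else 0 := by
      intro i
      split_ifs <;> simp
    rw [Finset.sum_congr rfl fun i _ => h1 i, Finset.sum_ite_eq']
    simp
  -- the action of w₀ on ω 6
  have hm' : ∀ j : Fin 7, ∃ n : ℕ, ⟪ω 6, w₀ (αs j)⟫ = -(n : ℝ) := by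
    intro j
    obtain ⟨n, hn⟩ := posNat _ (hw₀ (αs j) (αpos j))
    rw [inner_neg_left] at hn
    exact ⟨n, by rw [real_inner_comm]; linarith⟩
  choose m hm using hm'
  have Gw : Good Φ w₀ := good_weyl hΦ hw₀mem
  set u : V := w₀⁻¹ (ω 6) with hu
  have hwu : w₀ u = ω 6 := linv_apply_apply w₀ (ω 6)
  have huj : ∀ j : Fin 7, ⟪u, αs j⟫ = -(m j : ℝ) := by
    intro j
    rw [← Gw.1 u (αs j), hwu]
    exact hm j
  have huu : ⟪u, u⟫ = 3 / L2 := by rw [← Gw.1 u u, hwu, ωω]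
  have ueq : u = -∑ k, (m k : ℝ) • wv k := by
    apply ext_inner hbase.span_eq
    intro j
    rw [inner_sub_left, huj j, inner_neg_left, sum_inner]
    have h1 : ∀ k : Fin 7, ⟪(m k : ℝ) • wv k, αs j⟫ =
        if k = j then (m k : ℝ) else 0 := by
      intro k
      rw [real_inner_smul_left, Wdual k j]
      split_ifs <;> simp
    rw [Finset.sum_congr rfl fun k _ => h1 k, Finset.sum_ite_eq']
    simp
  have hSZ : (∑ k, (m k : ℤ) * ∑ i, ANZ i k * (m i : ℤ)) = 3 := by
    have h1 : ⟪u, u⟫ = -(∑ k, (m k : ℝ) * ⟪u, wv k⟫) := by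
      nth_rewrite 2 [ueq]
      rw [inner_neg_right, inner_sum]
      simp only [real_inner_smul_right]
    have h2 : ∀ k : Fin 7, ⟪u, wv k⟫ = L2⁻¹ * ∑ i, ((ANZ i k : ℤ) : ℝ) * (-(m i : ℝ)) := by
      intro k
      rw [hwv]
      simp only [real_inner_smul_right, inner_sum, huj]
    have h3 : (3 : ℝ) / L2 = L2⁻¹ * ∑ k, (m k : ℝ) * ∑ i, ((ANZ i k : ℤ) : ℝ) * (m i : ℝ) := by
      rw [← huu, h1, Finset.mul_sum, ← Finset.sum_neg_distrib]
      refine Finset.sum_congr rfl fun k _ => ?_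
      rw [h2 k]
      have hneg : (∑ i, ((ANZ i k : ℤ) : ℝ) * (-(m i : ℝ))) =
          -∑ i, ((ANZ i k : ℤ) : ℝ) * (m i : ℝ) := by
        rw [← Finset.sum_neg_distrib]
        exact Finset.sum_congr rfl fun i _ => by ring
      rw [hneg]
      ring
    have h4 : (∑ k, (m k : ℝ) * ∑ i, ((ANZ i k : ℤ) : ℝ) * (m i : ℝ)) = 3 := by
      have := h3
      field_simp at this
      linarith
    have h5 : ((∑ k, (m k : ℤ) * ∑ i, ANZ i k * (m i : ℤ) : ℤ) : ℝ) = 3 := by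
      push_cast
      exact h4
    exact_mod_cast h5
  -- solve the quadratic Diophantine constraint: m must be the indicator of node 7
  have hTle : (∑ j, m j) = 1 := by
    have hge : 2 * ((∑ j, (m j : ℤ)))^2 ≤ ∑ k, (m k : ℤ) * ∑ i, ANZ i k * (m i : ℤ) := by
      have step1 : ∀ k : Fin 7, (2:ℤ) * ∑ i, (m i : ℤ) ≤ ∑ i, ANZ i k * (m i : ℤ) := by
        intro k
        rw [Finset.mul_sum]
        refine Finset.sum_le_sum fun i _ => ?_
        exact mul_le_mul_of_nonneg_right (ANZ_ge_two i k) (Int.natCast_nonneg (m i))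
      calc 2 * ((∑ j, (m j : ℤ)))^2
          = ∑ k, (m k : ℤ) * (2 * ∑ i, (m i : ℤ)) := by
            rw [← Finset.sum_mul]; ring
        _ ≤ ∑ k, (m k : ℤ) * ∑ i, ANZ i k * (m i : ℤ) :=
            Finset.sum_le_sum fun k _ =>
              mul_le_mul_of_nonneg_left (step1 k) (Int.natCast_nonneg (m k))
    rw [hSZ] at hge
    have hcast : ((∑ j, m j : ℕ) : ℤ) = ∑ j, (m j : ℤ) := by push_cast; rfl
    have hle1 : (∑ j, m j) ≤ 1 := by
      by_contra hcon
      push_neg at hcon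
      have h2 : (2 : ℤ) ≤ ((∑ j, m j : ℕ) : ℤ) := by exact_mod_cast hcon
      rw [hcast] at h2
      nlinarith
    have hne0 : (∑ j, m j) ≠ 0 := by
      intro h0
      have hall : ∀ j : Fin 7, m j = 0 := by
        intro j
        have := Finset.sum_eq_zero_iff.mp h0
        exact this j (Finset.mem_univ j)
      rw [Finset.sum_eq_zero fun k _ => by rw [hall k]; push_cast; ring] at hSZ
      norm_num at hSZ
    omega
  obtain ⟨j₀, hj₀⟩ : ∃ j₀ : Fin 7, m j₀ ≠ 0 := by
    by_contra hcon
    push_neg at hcon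
    rw [Finset.sum_eq_zero fun j _ => hcon j] at hTle
    norm_num at hTle
  have hmj₀ : m j₀ = 1 := by
    have hle := Finset.single_le_sum (f := m) (fun i _ => Nat.zero_le _) (Finset.mem_univ j₀)
    omega
  have hmrest : ∀ i : Fin 7, i ≠ j₀ → m i = 0 := by
    intro i hi
    have hpair : m i + m j₀ ≤ ∑ j, m j := by
      have hsub : ({i, j₀} : Finset (Fin 7)) ⊆ Finset.univ := Finset.subset_univ _
      have := Finset.sum_le_sum_of_subset hsub (f := m)
      rwa [Finset.sum_pair hi] at this
    omega
  have mfun : ∀ i : Fin 7, (m i : ℤ) = if i = j₀ then 1 else 0 := by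
    intro i
    by_cases h : i = j₀
    · subst h; rw [hmj₀]; simp
    · rw [hmrest i h]; simp [h]
  have hAjj : ANZ j₀ j₀ = 3 := by
    have := hSZ
    simp only [mfun] at this
    simp only [mul_ite, ite_mul, one_mul, mul_one, zero_mul, mul_zero] at this
    rw [Finset.sum_ite_eq' Finset.univ j₀
      (fun k => ∑ i, if i = j₀ then ANZ i k else 0)] at this
    simp only [Finset.mem_univ, if_true] at this
    rw [Finset.sum_ite_eq' Finset.univ j₀ (fun i => ANZ i j₀)] at this
    simpa using this
  have hj6 : j₀ = 6 := ANZ_diag j₀ hAjj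
  have ueq2 : u = -(ω 6) := by
    rw [ueq, ωeq]
    have : (∑ k, (m k : ℝ) • wv k) = wv 6 := by
      have h1 : ∀ k : Fin 7, (m k : ℝ) • wv k = if k = (6:Fin 7) then wv k else 0 := by
        intro k
        by_cases h : k = (6:Fin 7)
        · subst h; rw [if_pos rfl, ← hj6, hmj₀]; simp
        · rw [if_neg h, hmrest k (by rw [hj6]; exact h), Nat.cast_zero, zero_smul]
      rw [Finset.sum_congr rfl fun k _ => h1 k, Finset.sum_ite_eq']
      simp
    rw [this]
  have w0fact : ∀ v : V, ⟪w₀ v, ω 6⟫ = -⟪v, ω 6⟫ := by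
    intro v
    have h1 : ⟪w₀ v, w₀ u⟫ = ⟪v, u⟫ := Gw.1 v u
    rw [hwu] at h1
    rw [h1, ueq2, inner_neg_right]
  have yω : ⟪(w₀ * wE6) (ω 6), ω 6⟫ = -(3 / L2) := by
    rw [lmul_apply, w0fact, pfix wE6 hwE6mem, ωω]
  -- key induction on words in the simple reflections
  have key : ∀ l : List (Fin 7),
      ((l.map fun i => sref (αs i)).prod ∈ weylGroup Φ) ∧
      |⟪((l.map fun i => sref (αs i)).prod) (ω 6), ω 6⟫ - 3 / L2| ≤
        2 * (l.count 6) / L2 := by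
    intro l
    induction l with
    | nil =>
      constructor
      · rw [List.map_nil, List.prod_nil]
        exact one_mem _
      · rw [List.map_nil, List.prod_nil, List.count_nil]
        have : ((1 : V ≃ₗ[ℝ] V)) (ω 6) = ω 6 := rfl
        rw [this, ωω]
        simp
    | cons i l ih =>
      obtain ⟨hgmem, hbound⟩ := ih
      have hsm : sref (αs i) ∈ weylGroup Φ :=
        Subgroup.subset_closure ⟨αs i, hαΦ i, rfl⟩
      constructor
      · rw [List.map_cons, List.prod_cons]
        exact mul_mem hsm hgmem
      · rw [List.map_cons, List.prod_cons, lmul_apply]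
        set g := (l.map fun i => sref (αs i)).prod with hg
        rw [sref_apply' (αs i) (g (ω 6)), inner_sub_left, real_inner_smul_left]
        by_cases hi : i = (6 : Fin 7)
        · subst hi
          have hα6ω : ⟪αs 6, ω 6⟫ = 1 := by rw [ωip 6, if_pos rfl]
          rw [hα6ω, mul_one]
          have hGg : Good Φ g := good_weyl hΦ hgmem
          have hβΦ : g⁻¹ (αs 6) ∈ Φ := ((good_inv hGg).2 (αs 6)).mp (hαΦ 6)
          have hβlen : ⟪g⁻¹ (αs 6), g⁻¹ (αs 6)⟫ = L2 := (good_inv hGg).1 (αs 6) (αs 6)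
          have hco : ⟪αs 6, g (ω 6)⟫ = ⟪g⁻¹ (αs 6), ω 6⟫ :=
            good_inner_right hGg (αs 6) (ω 6)
          have hb1 : |⟪g⁻¹ (αs 6), ω 6⟫| ≤ 1 := rootBound _ hβΦ hβlen
          rw [List.count_cons_self]
          have habs : |2 / ⟪αs 6, αs 6⟫ * ⟪αs 6, g (ω 6)⟫| ≤ 2 / L2 := by
            rw [hco, ← hL2def, abs_mul, abs_of_pos (by positivity : (0:ℝ) < 2 / L2)]
            calc 2 / L2 * |⟪g⁻¹ (αs 6), ω 6⟫| ≤ 2 / L2 * 1 :=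
              mul_le_mul_of_nonneg_left hb1 (by positivity)
            _ = 2 / L2 := mul_one _
          have htri : |⟪g (ω 6), ω 6⟫ - 2 / ⟪αs 6, αs 6⟫ * ⟪αs 6, g (ω 6)⟫ - 3 / L2| ≤
              |⟪g (ω 6), ω 6⟫ - 3 / L2| + |2 / ⟪αs 6, αs 6⟫ * ⟪αs 6, g (ω 6)⟫| := by
            have heq : ⟪g (ω 6), ω 6⟫ - 2 / ⟪αs 6, αs 6⟫ * ⟪αs 6, g (ω 6)⟫ - 3 / L2 =
                (⟪g (ω 6), ω 6⟫ - 3 / L2) + (-(2 / ⟪αs 6, αs 6⟫ * ⟪αs 6, g (ω 6)⟫)) := by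
              ring
            rw [heq]
            calc |(⟪g (ω 6), ω 6⟫ - 3 / L2) + (-(2 / ⟪αs 6, αs 6⟫ * ⟪αs 6, g (ω 6)⟫))| ≤
                |⟪g (ω 6), ω 6⟫ - 3 / L2| + |-(2 / ⟪αs 6, αs 6⟫ * ⟪αs 6, g (ω 6)⟫)| :=
                abs_add_le _ _
              _ = |⟪g (ω 6), ω 6⟫ - 3 / L2| + |2 / ⟪αs 6, αs 6⟫ * ⟪αs 6, g (ω 6)⟫| := by
                rw [abs_neg]
          have harith : 2 * ((l.count (6:Fin 7) : ℝ)) / L2 + 2 / L2 =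
              2 * (((l.count (6:Fin 7)) + 1 : ℕ) : ℝ) / L2 := by
            push_cast
            ring
          calc |⟪g (ω 6), ω 6⟫ - 2 / ⟪αs 6, αs 6⟫ * ⟪αs 6, g (ω 6)⟫ - 3 / L2|
              ≤ |⟪g (ω 6), ω 6⟫ - 3 / L2| + |2 / ⟪αs 6, αs 6⟫ * ⟪αs 6, g (ω 6)⟫| := htri
            _ ≤ 2 * (l.count (6:Fin 7)) / L2 + 2 / L2 := add_le_add hbound habs
            _ = 2 * (((l.count (6:Fin 7)) + 1 : ℕ) : ℝ) / L2 := harith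
        · have hzero : ⟪αs i, ω 6⟫ = 0 := by
            rw [ωip i, if_neg (fun h => hi h.symm)]
          rw [hzero, mul_zero, sub_zero, List.count_cons_of_ne hi]
          exact hbound
  constructor
  · -- part 1: every word for w₀ * wE6 has at least 3 letters s₇
    intro l hl _
    obtain ⟨_, hb⟩ := key l
    rw [hl, yω] at hb
    have h6 : |-(3 / L2) - 3 / L2| = 6 / L2 := by
      rw [show -(3 / L2) - 3 / L2 = -(6 / L2) by ring, abs_neg,
        abs_of_pos (by positivity : (0:ℝ) < 6 / L2)]
    rw [h6] at hb
    have hc : (6 : ℝ) ≤ 2 * (l.count (6:Fin 7)) := by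
      have h1 := (div_le_div_iff₀ hL2pos hL2pos).mp hb
      exact le_of_mul_le_mul_right h1 hL2pos
    have h2 : (3 : ℝ) ≤ ((l.count (6:Fin 7)) : ℝ) := by linarith
    exact_mod_cast h2
  · -- part 2: s₇ (w₀ wE6) s₇ is not in the parabolic subgroup
    intro hmem
    have hpfix := pfix _ hmem (sref (αs 6) (ω 6))
    have hyymem : w₀ * wE6 ∈ weylGroup Φ := mul_mem hw₀mem (hPle hwE6mem)
    have hGyy : Good Φ (w₀ * wE6) := good_weyl hΦ hyymem
    -- compute the left side
    have hval : (sref (αs 6) * (w₀ * wE6) * sref (αs 6)) (sref (αs 6) (ω 6)) =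
        sref (αs 6) ((w₀ * wE6) (ω 6)) := by
      rw [lmul_apply, lmul_apply, sref_sref]
    rw [hval] at hpfix
    have hα6ω : ⟪αs 6, ω 6⟫ = 1 := by rw [ωip 6, if_pos rfl]
    have hlhs : ⟪sref (αs 6) ((w₀ * wE6) (ω 6)), ω 6⟫ =
        -(3 / L2) - 2 / L2 * ⟪αs 6, (w₀ * wE6) (ω 6)⟫ := by
      rw [sref_apply', inner_sub_left, real_inner_smul_left, hα6ω, mul_one, yω, ← hL2def]
    have hrhs : ⟪sref (αs 6) (ω 6), ω 6⟫ = 1 / L2 := by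
      rw [sref_apply', inner_sub_left, real_inner_smul_left, hα6ω, mul_one, ωω, ← hL2def]
      field_simp
      norm_num
    rw [hlhs, hrhs] at hpfix
    -- so ⟪αs 6, (w₀ wE6)(ω 6)⟫ = -2, contradicting Cauchy–Schwarz
    set t : ℝ := ⟪αs 6, (w₀ * wE6) (ω 6)⟫ with ht
    have hteq : t = -2 := by
      have h0 := congrArg (fun x : ℝ => x * L2) hpfix
      have e0 : (-(3 / L2) - 2 / L2 * t) * L2 = -3 - 2 * t := by
        field_simp
      have e1 : 1 / L2 * L2 = 1 := by field_simp
      rw [e0, e1] at h0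
      linarith
    have hcs := real_inner_mul_inner_self_le (αs 6) ((w₀ * wE6) (ω 6))
    have hnorm : ⟪(w₀ * wE6) (ω 6), (w₀ * wE6) (ω 6)⟫ = 3 / L2 := by
      rw [hGyy.1, ωω]
    rw [← ht, hnorm, ← hL2def] at hcs
    have h3 : L2 * (3 / L2) = 3 := by field_simp
    rw [h3] at hcs
    rw [hteq] at hcs
    norm_num at hcs






end Paper
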